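/- Let $\rho : \mathbb{R} \to [0,\infty)$ be the constant density $\rho = \mathbf{1}_{[0,N)}$ for an integer $N \ge 1$, and let $\mathbb{P}$ be the one-dimensional floating crystal state $\mathbb{P} = \mathrm{Sym}\int_0^1 \delta_s \otimes \delta_{1+s} \otimes \cdots \otimes \delta_{N-1+s}\,ds$. Then the one-particle density of $\mathbb{P}$ equals $\mathbf{1}_{[0,N)}$, and for any even measurable function $w : \mathbb{R} \to [0,\infty]$ the interaction energy of $\mathbb{P}$ equals $\sum_{1 \le j < k \le N} w(k - j) = \sum_{m=1}^{N-1} (N-m)\, w(m)$. -/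

import Mathlib

open MeasureTheory
open scoped ENNReal

noncomputable section

/-- The 1D floating Wigner crystal: the symmetrization of
`∫₀¹ δ_s ⊗ δ_{1+s} ⊗ ⋯ ⊗ δ_{N-1+s} ds`. -/
def floatP (N : ℕ) : Measure (Fin N → ℝ) :=
  (Nat.factorial N : ℝ≥0∞)⁻¹ • ∑ σ : Equiv.Perm (Fin N),
    (volume.restrict (Set.Ioc (0 : ℝ) 1)).map (fun s => fun j => ((σ j : ℕ) : ℝ) + s)

/-!
Each summand of `floatP N` is Lebesgue measure on `(0, 1]` pushed forward by the measurable
embedding `s ↦ σ + s`. Its first marginal is Lebesgue measure on `(σ 0, σ 0 + 1]`, and as `σ`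
runs over the permutations, `σ 0` takes every value in `Fin N` exactly `(N - 1)!` times: this
gives the density. The pair energy is invariant under translations and, `w` being even, under
relabelling the particles, so on the support of every summand it equals the energy of the
lattice `0, 1, …, N - 1`, in which exactly `N - m` pairs are at distance `m`.
-/

open Finset
open scoped Nat

theorem sum_ite_lt_comp_perm {α M : Type*} [Fintype α] [LinearOrder α] [AddCommMonoid M]
    (F : α → α → M) (hF : ∀ a b, F a b = F b a) (σ : Equiv.Perm α) :
    ∑ j, ∑ k, (if j < k then F (σ j) (σ k) else 0) = ∑ j, ∑ k, if j < k then F j k else 0 := by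
  rw [← Fintype.sum_prod_type' (fun j k => if j < k then F (σ j) (σ k) else 0),
    ← Fintype.sum_prod_type' (fun j k => if j < k then F j k else 0), ← sum_filter,
    ← sum_filter]
  -- sorting the image pair `(σ j, σ k)` is a bijection of `{j < k}` onto itself
  let sort : α × α → α × α := fun p => (min p.1 p.2, max p.1 p.2)
  refine sum_nbij' (fun p => sort (σ p.1, σ p.2)) (fun q => sort (σ.symm q.1, σ.symm q.2))
    ?_ ?_ ?_ ?_ ?_
  · rintro ⟨a, b⟩ h
    simpa [sort] using (show a < b by simpa using h).ne'
  · rintro ⟨a, b⟩ h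
    simpa [sort] using (show a < b by simpa using h).ne'
  · rintro ⟨a, b⟩ h
    replace h : a < b := by simpa using h
    rcases lt_or_gt_of_ne (σ.injective.ne h.ne) with h' | h' <;> simp [sort, h'.le, h.le]
  · rintro ⟨a, b⟩ h
    replace h : a < b := by simpa using h
    rcases lt_or_gt_of_ne (σ.symm.injective.ne h.ne) with h' | h' <;> simp [sort, h'.le, h.le]
  · rintro ⟨a, b⟩ -
    rcases le_total (σ a) (σ b) with h' | h' <;> simp [sort, h', hF (σ a)]

theorem sum_range_ite_lt_sub {M : Type*} [AddCommMonoid M] (g : ℕ → M) (N : ℕ) :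
    ∑ j ∈ range N, ∑ k ∈ range N, (if j < k then g (k - j) else 0)
      = ∑ m ∈ Ico 1 N, (N - m) • g m := by
  induction N with
  | zero => simp
  | succ N ih =>
    have hrow : ∑ k ∈ range N, (if N < k then g (k - N) else 0) = 0 :=
      sum_eq_zero fun k hk => if_neg (mem_range.1 hk).not_gt
    have hcol : ∑ j ∈ range N, (if j < N then g (N - j) else 0) = ∑ m ∈ Ico 1 (N + 1), g m := by
      rw [sum_Ico_eq_sum_range, ← sum_range_reflect]
      refine sum_congr (by simp) fun j hj => ?_
      rw [mem_range] at hj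
      rw [if_pos (by omega)]
      congr 1
      omega
    have hcoef : ∑ m ∈ Ico 1 (N + 1), (N + 1 - m) • g m
        = ∑ m ∈ Ico 1 (N + 1), (N - m) • g m + ∑ m ∈ Ico 1 (N + 1), g m := by
      rw [← sum_add_distrib]
      refine sum_congr rfl fun m hm => ?_
      rw [mem_Ico] at hm
      rw [Nat.sub_add_comm (Nat.le_of_lt_succ hm.2), succ_nsmul]
    have htop : ∑ m ∈ Ico 1 (N + 1), (N - m) • g m = ∑ m ∈ Ico 1 N, (N - m) • g m := by
      refine (sum_subset (Ico_subset_Ico_right N.le_succ) fun m hm hm' => ?_).symm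
      simp only [mem_Ico, not_and, not_lt] at hm hm'
      rw [Nat.sub_eq_zero_of_le (hm' hm.1), zero_smul]
    simp only [sum_range_succ, lt_irrefl, if_false, add_zero]
    rw [hrow, add_zero, sum_add_distrib, ih, hcol, hcoef, htop]

theorem sum_perm_apply_zero {M : Type*} [AddCommMonoid M] {n : ℕ} (f : Fin (n + 1) → M) :
    ∑ σ : Equiv.Perm (Fin (n + 1)), f (σ 0) = n ! • ∑ p, f p := by
  rw [← Equiv.Perm.decomposeFin.symm.sum_comp, Fintype.sum_prod_type]
  simp [Equiv.Perm.decomposeFin_symm_apply_zero, smul_sum, Fintype.card_perm]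

theorem sum_restrict_Ioc_range {α : Type*} [LinearOrder α] [TopologicalSpace α]
    [OrderClosedTopology α] [MeasurableSpace α] [OpensMeasurableSpace α] (μ : Measure α)
    {a : ℕ → α} (ha : Monotone a) (m : ℕ) :
    ∑ i ∈ range m, μ.restrict (Set.Ioc (a i) (a (i + 1))) = μ.restrict (Set.Ioc (a 0) (a m)) := by
  induction m with
  | zero => simp
  | succ m ih =>
    rw [sum_range_succ, ih, ← Measure.restrict_union
      (Set.Ioc_disjoint_Ioc_of_le le_rfl) measurableSet_Ioc,
      Set.Ioc_union_Ioc_eq_Ioc (ha (Nat.zero_le m)) (ha m.le_succ)]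

theorem map_const_add_restrict_Ioc (c : ℝ) :
    (volume.restrict (Set.Ioc (0 : ℝ) 1)).map (c + ·) = volume.restrict (Set.Ioc c (c + 1)) := by
  have h : Set.Ioc (0 : ℝ) 1 = (c + ·) ⁻¹' Set.Ioc c (c + 1) := by simp
  rw [h, ← (measurableEmbedding_addLeft c).restrict_map, map_add_left_eq_self]

theorem measurableEmbedding_add_const_pi {ι : Type*} [Fintype ι] [Nonempty ι] (c : ι → ℝ) :
    MeasurableEmbedding fun s : ℝ => fun j => c j + s := by
  refine Isometry.isClosedEmbedding (Isometry.of_dist_eq fun s t => ?_) |>.measurableEmbedding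
  exact (dist_add_left c (fun _ => s) (fun _ => t)).trans (dist_pi_const s t)

def pairEnergy {ι : Type*} [Fintype ι] [LinearOrder ι] (w : ℝ → ℝ≥0∞) (x : ι → ℝ) : ℝ≥0∞ :=
  ∑ j, ∑ k, if j < k then w (x j - x k) else 0

section pairEnergy

variable {ι : Type*} [Fintype ι] [LinearOrder ι] (w : ℝ → ℝ≥0∞)

theorem pairEnergy_add_const (x : ι → ℝ) (s : ℝ) :
    pairEnergy w (fun j => x j + s) = pairEnergy w x := by
  simp only [pairEnergy, add_sub_add_right_eq_sub]

theorem pairEnergy_comp_perm (heven : ∀ x, w (-x) = w x) (x : ι → ℝ) (σ : Equiv.Perm ι) :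
    pairEnergy w (x ∘ σ) = pairEnergy w x :=
  sum_ite_lt_comp_perm (fun a b => w (x a - x b)) (fun a b => by rw [← heven, neg_sub]) σ

theorem pairEnergy_eq_of_even (heven : ∀ x, w (-x) = w x) (x : ι → ℝ) :
    pairEnergy w x = ∑ j, ∑ k, if j < k then w (x k - x j) else 0 := by
  refine Fintype.sum_congr _ _ fun j => Fintype.sum_congr _ _ fun k => ?_
  rw [← heven, neg_sub]

end pairEnergy

theorem sum_ite_lt_natCast_sub (N : ℕ) (w : ℝ → ℝ≥0∞) :
    ∑ j : Fin N, ∑ k : Fin N, (if j < k then w (((k : ℕ) : ℝ) - ((j : ℕ) : ℝ)) else 0)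
      = ∑ m ∈ Ico 1 N, ((N - m : ℕ) : ℝ≥0∞) * w m := by
  have h := sum_range_ite_lt_sub (fun m : ℕ => w m) N
  simp only [sum_range, Fin.val_fin_lt, nsmul_eq_mul] at h
  rw [← h]
  refine Fintype.sum_congr _ _ fun j => Fintype.sum_congr _ _ fun k => ?_
  split_ifs with hjk
  · rw [Nat.cast_sub hjk.le]
  · rfl

theorem lintegral_floatP (N : ℕ) [NeZero N] (f : (Fin N → ℝ) → ℝ≥0∞) :
    ∫⁻ X, f X ∂floatP N
      = (N ! : ℝ≥0∞)⁻¹ * ∑ σ : Equiv.Perm (Fin N),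
          ∫⁻ s in Set.Ioc (0 : ℝ) 1, f fun j => ((σ j : ℕ) : ℝ) + s := by
  simp only [floatP, lintegral_smul_measure, lintegral_finsetSum_measure, smul_eq_mul,
    (measurableEmbedding_add_const_pi _).lintegral_map]

theorem lintegral_pairEnergy_floatP (N : ℕ) [NeZero N] (w : ℝ → ℝ≥0∞)
    (heven : ∀ x, w (-x) = w x) :
    ∫⁻ X, pairEnergy w X ∂floatP N = pairEnergy w fun j : Fin N => ((j : ℕ) : ℝ) := by
  have hconst (σ : Equiv.Perm (Fin N)) (s : ℝ) : pairEnergy w (fun j => ((σ j : ℕ) : ℝ) + s)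
      = pairEnergy w fun j : Fin N => ((j : ℕ) : ℝ) := by
    rw [pairEnergy_add_const]
    exact pairEnergy_comp_perm w heven (fun j : Fin N => ((j : ℕ) : ℝ)) σ
  simp only [lintegral_floatP, hconst, setLIntegral_const, Real.volume_Ioc, sub_zero,
    ENNReal.ofReal_one, mul_one, sum_const, card_univ, Fintype.card_perm,
    Fintype.card_fin, nsmul_eq_mul, ← mul_assoc]
  rw [ENNReal.inv_mul_cancel (by exact_mod_cast N.factorial_ne_zero) (ENNReal.natCast_ne_top _),
    one_mul]

theorem map_floatP_eval_zero (N : ℕ) [NeZero N] :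
    (floatP N).map (fun X => X 0) = (N : ℝ≥0∞)⁻¹ • volume.restrict (Set.Ico (0 : ℝ) N) := by
  obtain ⟨n, rfl⟩ := Nat.exists_eq_succ_of_ne_zero (NeZero.ne N)
  have hterm (σ : Equiv.Perm (Fin (n + 1))) :
      ((volume.restrict (Set.Ioc (0 : ℝ) 1)).map fun s j => ((σ j : ℕ) : ℝ) + s).map (fun X => X 0)
        = volume.restrict (Set.Ioc ((σ 0 : ℕ) : ℝ) ((σ 0 : ℕ) + 1)) := by
    rw [Measure.map_map (measurable_pi_apply 0) (measurableEmbedding_add_const_pi _).measurable]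
    exact map_const_add_restrict_Ioc _
  have hsum : ∑ p : Fin (n + 1), volume.restrict (Set.Ioc ((p : ℕ) : ℝ) ((p : ℕ) + 1))
      = volume.restrict (Set.Ioc (0 : ℝ) (n + 1 : ℕ)) := by
    rw [Fin.sum_univ_eq_sum_range (fun i : ℕ => volume.restrict (Set.Ioc (i : ℝ) (i + 1)))]
    simpa using sum_restrict_Ioc_range volume Nat.mono_cast (n + 1)
  have hcoef : ((n + 1) ! : ℝ≥0∞)⁻¹ * n ! = ((n + 1 : ℕ) : ℝ≥0∞)⁻¹ := by
    rw [Nat.factorial_succ, Nat.cast_mul, ENNReal.mul_inv (by simp) (by simp), mul_assoc,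
      ENNReal.inv_mul_cancel (by exact_mod_cast n.factorial_ne_zero) (ENNReal.natCast_ne_top _),
      mul_one]
  rw [floatP, Measure.map_smul, ← Measure.sum_fintype,
    Measure.map_sum (measurable_pi_apply 0).aemeasurable, Measure.sum_fintype]
  simp only [hterm]
  rw [sum_perm_apply_zero (fun p => volume.restrict (Set.Ioc ((p : ℕ) : ℝ) ((p : ℕ) + 1))), hsum,
    ← Nat.cast_smul_eq_nsmul ℝ≥0∞, smul_smul, hcoef]
  exact congrArg _ (Measure.restrict_congr_set (Ioc_ae_eq_Icc.trans Ico_ae_eq_Icc.symm))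

theorem stmt_10_general (N : ℕ) [NeZero N]
    (w : ℝ → ℝ≥0∞) (heven : ∀ x, w (-x) = w x) :
    (floatP N).map (fun X => X 0)
      = (N : ℝ≥0∞)⁻¹ • volume.restrict (Set.Ico (0 : ℝ) (N : ℝ)) ∧
    (∫⁻ X, ∑ j : Fin N, ∑ k : Fin N,
        (if j < k then w (X j - X k) else 0) ∂(floatP N))
      = ∑ j : Fin N, ∑ k : Fin N,
          (if j < k then w (((k : ℕ) : ℝ) - ((j : ℕ) : ℝ)) else 0) ∧
    (∑ j : Fin N, ∑ k : Fin N,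
        (if j < k then w (((k : ℕ) : ℝ) - ((j : ℕ) : ℝ)) else 0))
      = ∑ m ∈ Finset.Ico 1 N, ((N - m : ℕ) : ℝ≥0∞) * w ((m : ℕ) : ℝ) :=
  ⟨map_floatP_eval_zero N,
    (lintegral_pairEnergy_floatP N w heven).trans (pairEnergy_eq_of_even w heven _),
    sum_ite_lt_natCast_sub N w⟩

/-- The 1D floating crystal has constant one-particle density `1_{[0,N)}` and its
interaction energy is `Σ_{j<k} w(k-j) = Σ_{m=1}^{N-1} (N-m) w(m)`. -/
theorem stmt_10 (N : ℕ) [NeZero N] (hN : 1 ≤ N)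
    (w : ℝ → ℝ≥0∞) (hw : Measurable w) (heven : ∀ x, w (-x) = w x) :
    (floatP N).map (fun X => X 0)
      = (N : ℝ≥0∞)⁻¹ • volume.restrict (Set.Ico (0 : ℝ) (N : ℝ)) ∧
    (∫⁻ X, ∑ j : Fin N, ∑ k : Fin N,
        (if j < k then w (X j - X k) else 0) ∂(floatP N))
      = ∑ j : Fin N, ∑ k : Fin N,
          (if j < k then w (((k : ℕ) : ℝ) - ((j : ℕ) : ℝ)) else 0) ∧
    (∑ j : Fin N, ∑ k : Fin N,
        (if j < k then w (((k : ℕ) : ℝ) - ((j : ℕ) : ℝ)) else 0))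
      = ∑ m ∈ Finset.Ico 1 N, ((N - m : ℕ) : ℝ≥0∞) * w ((m : ℕ) : ℝ) :=
  stmt_10_general N w heven
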